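/- arXiv:1612.00401 — 5 statements merged into one kernel-verified Lean document; each statement's English description precedes it below -/
import Mathlib

section
/- For every complex matrix J of size n×n, the 2n×2n block matrix with blocks [[√(JJᴴ), −J], [−Jᴴ, √(JᴴJ)]] is positive semidefinite, where √(JJᴴ) and √(JᴴJ) denote the positive semidefinite square roots of JJᴴ and JᴴJ respectively. -/
open Matrix
open scoped ComplexOrder
open scoped MatrixOrder

/-!
The Hermitian dilation `H = [[0, J], [Jᴴ, 0]]` satisfies `Hᴴ H = diag(J Jᴴ, Jᴴ J)`, so its
absolute value `|H| = √(Hᴴ H)` is `diag(√(J Jᴴ), √(Jᴴ J))`, and the block matrix in question is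
`|H| - H = 2 H⁻ ≥ 0`.
-/

theorem CFC.le_abs {A : Type*} [NonUnitalRing A] [StarRing A] [TopologicalSpace A]
    [Module ℝ A] [SMulCommClass ℝ A A] [IsScalarTower ℝ A A]
    [NonUnitalContinuousFunctionalCalculus ℝ A IsSelfAdjoint]
    [PartialOrder A] [StarOrderedRing A] [NonnegSpectrumClass ℝ A]
    [IsTopologicalRing A] [T2Space A] {a : A} (ha : IsSelfAdjoint a) : a ≤ CFC.abs a := by
  rw [← sub_nonneg, CFC.abs_sub_self a ha]
  exact smul_nonneg zero_le_two (CFC.negPart_nonneg a)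

namespace Matrix

theorem PosSemidef.fromBlocks_zero {m n R : Type*} [Fintype m] [Fintype n] [CommRing R]
    [PartialOrder R] [StarRing R] [StarOrderedRing R] {A : Matrix m m R} {D : Matrix n n R}
    (hA : A.PosSemidef) (hD : D.PosSemidef) : (fromBlocks A 0 0 D).PosSemidef := by
  refine .of_dotProduct_mulVec_nonneg (hA.isHermitian.fromBlocks (by simp) hD.isHermitian)
    fun x => ?_
  obtain ⟨u, v, rfl⟩ : ∃ u v, x = Sum.elim u v := ⟨_, _, (Sum.elim_comp_inl_inr x).symm⟩
  simp only [fromBlocks_mulVec, Sum.elim_comp_inl, Sum.elim_comp_inr, zero_mulVec, add_zero,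
    zero_add, Function.star_sumElim, sumElim_dotProduct_sumElim]
  exact add_nonneg (hA.dotProduct_mulVec_nonneg _) (hD.dotProduct_mulVec_nonneg _)

variable {m n 𝕜 : Type*} [Fintype m] [Fintype n] [DecidableEq m] [DecidableEq n] [RCLike 𝕜]

theorem cfcAbs_fromBlocks_zero_conjTranspose_zero (B : Matrix m n 𝕜) :
    CFC.abs (fromBlocks 0 B Bᴴ 0) = fromBlocks (CFC.sqrt (B * Bᴴ)) 0 0 (CFC.sqrt (Bᴴ * B)) := by
  refine CFC.sqrt_unique ?_ (nonneg_iff_posSemidef.mpr ?_)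
  · rw [star_eq_conjTranspose, fromBlocks_conjTranspose, fromBlocks_multiply, fromBlocks_multiply,
      CFC.sqrt_mul_sqrt_self _ (posSemidef_self_mul_conjTranspose B).nonneg,
      CFC.sqrt_mul_sqrt_self _ (posSemidef_conjTranspose_mul_self B).nonneg]
    simp
  · exact (CFC.sqrt_nonneg _).posSemidef.fromBlocks_zero (CFC.sqrt_nonneg _).posSemidef

theorem posSemidef_fromBlocks_sqrt_neg_neg_sqrt (B : Matrix m n 𝕜) :
    (fromBlocks (CFC.sqrt (B * Bᴴ)) (-B) (-Bᴴ) (CFC.sqrt (Bᴴ * B))).PosSemidef := by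
  have hH : IsSelfAdjoint (fromBlocks 0 B Bᴴ 0) :=
    isHermitian_zero.fromBlocks rfl isHermitian_zero
  have hAbsSub : fromBlocks (CFC.sqrt (B * Bᴴ)) (-B) (-Bᴴ) (CFC.sqrt (Bᴴ * B)) =
      CFC.abs (fromBlocks 0 B Bᴴ 0) - fromBlocks 0 B Bᴴ 0 := by
    rw [cfcAbs_fromBlocks_zero_conjTranspose_zero, sub_eq_add_neg, fromBlocks_neg, fromBlocks_add]
    simp
  rw [hAbsSub, ← nonneg_iff_posSemidef, sub_nonneg]
  exact CFC.le_abs hH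

end Matrix

/-- For every complex square matrix `J`, the block matrix
`[[√(JJᴴ), −J], [−Jᴴ, √(JᴴJ)]]` is positive semidefinite, where `√` denotes the
positive semidefinite square root. -/
theorem stmt0 (n : ℕ) (J : Matrix (Fin n) (Fin n) ℂ) :
    (Matrix.fromBlocks
      (CFC.sqrt (J * Jᴴ)) (-J)
      (-Jᴴ) (CFC.sqrt (Jᴴ * J))).PosSemidef :=
  posSemidef_fromBlocks_sqrt_neg_neg_sqrt J
end

section
/- Let ρ be a positive semidefinite complex n×n matrix with trace 1 and let x ∈ ℂⁿ be a unit vector. Then the trace norm of ρ − xxᴴ satisfies ‖ρ − xxᴴ‖₁ ≥ 2 − 2‖ρ‖∞, where ‖ρ‖∞ is the operator norm of ρ. -/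
/-!
`Δ = ρ - xxᴴ` is Hermitian with trace `0`, and `⟪x, Δ x⟫ = ⟪x, ρ x⟫ - 1`. Pairing `Δ` with the
reflection `1 - 2xxᴴ` gives `‖Δ‖₁ ≥ tr Δ - 2⟪x, Δ x⟫ = 2 - 2⟪x, ρ x⟫ ≥ 2 - 2‖ρ‖∞`. In an
eigenbasis `(uᵢ)` of `Δ` the first inequality is `∑ λᵢ (1 - 2tᵢ) ≤ ∑ |λᵢ|` for the probability
weights `tᵢ = |⟪uᵢ, x⟫|²`, and `‖Δ‖₁ = ∑ |λᵢ|` because `√(ΔᴴΔ) = √(Δ²) = |Δ|`.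
-/

open Matrix
open scoped ComplexOrder

/-- The trace (Schatten-1) norm of a complex square matrix: the trace of the positive
semidefinite square root of `XᴴX`. -/
noncomputable def traceNorm {n : ℕ} (X : Matrix (Fin n) (Fin n) ℂ) : ℝ :=
  (Matrix.trace (((Matrix.posSemidef_conjTranspose_mul_self X).1.eigenvectorUnitary : Matrix (Fin n) (Fin n) ℂ) *
    diagonal (((↑) : ℝ → ℂ) ∘ Real.sqrt ∘ (Matrix.posSemidef_conjTranspose_mul_self X).1.eigenvalues) *
    star ((Matrix.posSemidef_conjTranspose_mul_self X).1.eigenvectorUnitary : Matrix (Fin n) (Fin n) ℂ))).re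

/-- The ℓ²→ℓ² operator norm of a complex matrix. -/
noncomputable def l2OpNorm {n : ℕ} (X : Matrix (Fin n) (Fin n) ℂ) : ℝ :=
  ‖Matrix.toEuclideanCLM (𝕜 := ℂ) X‖

theorem sum_sub_two_mul_sum_mul_le_sum_abs {ι : Type*} [Fintype ι] (a t : ι → ℝ)
    (ht₀ : ∀ i, 0 ≤ t i) (ht₁ : ∑ i, t i = 1) :
    ∑ i, a i - 2 * ∑ i, a i * t i ≤ ∑ i, |a i| := by
  have ht_le : ∀ i, t i ≤ 1 := fun i =>
    ht₁ ▸ Finset.single_le_sum (fun j _ => ht₀ j) (Finset.mem_univ i)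
  rw [Finset.mul_sum, ← Finset.sum_sub_distrib]
  refine Finset.sum_le_sum fun i _ => ?_
  have : |1 - 2 * t i| ≤ 1 := abs_le.mpr ⟨by linarith [ht_le i], by linarith [ht₀ i]⟩
  calc a i - 2 * (a i * t i) = a i * (1 - 2 * t i) := by ring
    _ ≤ |a i| * |1 - 2 * t i| := (le_abs_self _).trans (abs_mul _ _).le
    _ ≤ |a i| := mul_le_of_le_one_right (abs_nonneg _) this

namespace Matrix

variable {𝕜 ι : Type*} [RCLike 𝕜] [Fintype ι]

theorem dotProduct_star_self_eq_sum_norm_sq (x : ι → 𝕜) :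
    star x ⬝ᵥ x = ((∑ i, ‖x i‖ ^ 2 : ℝ) : 𝕜) := by
  simp [dotProduct, RCLike.conj_mul]

variable [DecidableEq ι]

theorem dotProduct_star_self_star_mulVec_of_mem_unitaryGroup {U : Matrix ι ι 𝕜}
    (hU : U ∈ unitaryGroup ι 𝕜) (x : ι → 𝕜) :
    star (star U *ᵥ x) ⬝ᵥ (star U *ᵥ x) = star x ⬝ᵥ x := by
  rw [star_mulVec, ← star_eq_conjTranspose, star_star, ← dotProduct_mulVec, mulVec_mulVec,
    Unitary.mul_star_self_of_mem hU, one_mulVec]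

theorem IsHermitian.star_dotProduct_mulVec_eq_sum_eigenvalues_mul {A : Matrix ι ι 𝕜}
    (hA : A.IsHermitian) (x : ι → 𝕜) :
    star x ⬝ᵥ A *ᵥ x = ∑ i, (hA.eigenvalues i : 𝕜) *
      ‖(star (hA.eigenvectorUnitary : Matrix ι ι 𝕜) *ᵥ x) i‖ ^ 2 := by
  set U : Matrix ι ι 𝕜 := (hA.eigenvectorUnitary : Matrix ι ι 𝕜)
  have hU : star x ᵥ* U = star (star U *ᵥ x) := by
    rw [star_mulVec, ← star_eq_conjTranspose, star_star]
  conv_lhs => rw [hA.spectral_theorem, Unitary.conjStarAlgAut_apply]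
  rw [← mulVec_mulVec, ← mulVec_mulVec, dotProduct_mulVec, hU]
  simp only [dotProduct, mulVec_diagonal, Pi.star_apply, RCLike.star_def, Function.comp_apply]
  refine Finset.sum_congr rfl fun i _ => ?_
  rw [← RCLike.conj_mul]
  ring

theorem IsHermitian.re_trace_sub_two_mul_le_sum_abs_eigenvalues {A : Matrix ι ι 𝕜}
    (hA : A.IsHermitian) {x : ι → 𝕜} (hx : star x ⬝ᵥ x = 1) :
    RCLike.re A.trace - 2 * RCLike.re (star x ⬝ᵥ A *ᵥ x) ≤ ∑ i, |hA.eigenvalues i| := by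
  have hweights : ∑ i, ‖(star (hA.eigenvectorUnitary : Matrix ι ι 𝕜) *ᵥ x) i‖ ^ 2 = 1 := by
    have h := dotProduct_star_self_star_mulVec_of_mem_unitaryGroup hA.eigenvectorUnitary.2 x
    rw [hx, dotProduct_star_self_eq_sum_norm_sq] at h
    exact_mod_cast h
  rw [hA.trace_eq_sum_eigenvalues, hA.star_dotProduct_mulVec_eq_sum_eigenvalues_mul]
  simp only [map_sum, ← RCLike.ofReal_pow, ← RCLike.ofReal_mul, RCLike.ofReal_re]
  exact sum_sub_two_mul_sum_mul_le_sum_abs _ _ (fun i => sq_nonneg _) hweights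

theorem IsHermitian.trace_cfc {A : Matrix ι ι 𝕜} (hA : A.IsHermitian) (f : ℝ → ℝ) :
    (cfc f A).trace = ∑ i, (f (hA.eigenvalues i) : 𝕜) := by
  rw [hA.cfc_eq, IsHermitian.cfc, Unitary.conjStarAlgAut_apply, trace_mul_cycle,
    Unitary.coe_star_mul_self, one_mul, trace_diagonal]
  rfl

end Matrix

theorem traceNorm_eq_re_trace_cfc_sqrt {n : ℕ} (X : Matrix (Fin n) (Fin n) ℂ) :
    traceNorm X = (cfc Real.sqrt (Xᴴ * X)).trace.re := by
  rw [(posSemidef_conjTranspose_mul_self X).1.cfc_eq, IsHermitian.cfc,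
    Unitary.conjStarAlgAut_apply]
  rfl

theorem Matrix.IsHermitian.traceNorm_eq_sum_abs_eigenvalues {n : ℕ}
    {A : Matrix (Fin n) (Fin n) ℂ} (hA : A.IsHermitian) :
    traceNorm A = ∑ i, |hA.eigenvalues i| := by
  have hsqrt_sq : (Real.sqrt ∘ (· ^ 2 : ℝ → ℝ)) = abs := funext Real.sqrt_sq_eq_abs
  rw [traceNorm_eq_re_trace_cfc_sqrt, hA.eq, ← sq, ← cfc_pow_id (R := ℝ) A 2,
    ← cfc_comp Real.sqrt (· ^ 2) A, hsqrt_sq, hA.trace_cfc]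
  simp

theorem re_star_dotProduct_mulVec_le_l2OpNorm {n : ℕ} (A : Matrix (Fin n) (Fin n) ℂ)
    {x : Fin n → ℂ} (hx : star x ⬝ᵥ x = 1) :
    (star x ⬝ᵥ A *ᵥ x).re ≤ l2OpNorm A := by
  set y := WithLp.toLp 2 x
  have hy : ‖y‖ = 1 := by
    rw [← pow_eq_one_iff_of_nonneg (norm_nonneg y) two_ne_zero, ← RCLike.ofReal_inj (K := ℂ),
      RCLike.ofReal_pow, ← inner_self_eq_norm_sq_to_K, EuclideanSpace.inner_toLp_toLp,
      dotProduct_comm, hx, RCLike.ofReal_one]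
  calc (star x ⬝ᵥ A *ᵥ x).re = RCLike.re (inner ℂ y (toEuclideanCLM (𝕜 := ℂ) A y)) := by
        rw [toEuclideanCLM_toLp, EuclideanSpace.inner_toLp_toLp, dotProduct_comm]; rfl
    _ ≤ ‖y‖ * ‖toEuclideanCLM (𝕜 := ℂ) A y‖ := re_inner_le_norm _ _
    _ ≤ ‖y‖ * (l2OpNorm A * ‖y‖) := by gcongr; exact (toEuclideanCLM (𝕜 := ℂ) A).le_opNorm y
    _ = l2OpNorm A := by rw [hy, one_mul, mul_one]

/-- For a positive semidefinite `ρ` with trace 1 and a unit vector `x`,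
`‖ρ − xxᴴ‖₁ ≥ 2 − 2‖ρ‖∞`. -/
theorem stmt10 (n : ℕ) (ρ : Matrix (Fin n) (Fin n) ℂ) (hρ : ρ.PosSemidef)
    (htr : Matrix.trace ρ = 1) (x : Fin n → ℂ) (hx : ∑ i, Complex.normSq (x i) = 1) :
    2 - 2 * l2OpNorm ρ ≤ traceNorm (ρ - Matrix.vecMulVec x (star x)) := by
  have hxx : star x ⬝ᵥ x = 1 := by
    simp_rw [dotProduct_star_self_eq_sum_norm_sq, Complex.sq_norm, hx, RCLike.ofReal_one]
  have hΔ : (ρ - vecMulVec x (star x)).IsHermitian :=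
    hρ.1.sub (posSemidef_vecMulVec_self_star x).1
  have htrace : (ρ - vecMulVec x (star x)).trace = 0 := by
    rw [trace_sub, htr, trace_vecMulVec, dotProduct_comm, hxx, sub_self]
  have hproj : star x ⬝ᵥ vecMulVec x (star x) *ᵥ x = 1 := by
    rw [vecMulVec_mulVec, hxx, MulOpposite.op_one, one_smul, hxx]
  have hdual := hΔ.re_trace_sub_two_mul_le_sum_abs_eigenvalues hxx
  rw [← hΔ.traceNorm_eq_sum_abs_eigenvalues, htrace, sub_mulVec, dotProduct_sub, hproj] at hdual
  have hnorm := re_star_dotProduct_mulVec_le_l2OpNorm ρ hxx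
  simp only [map_zero, map_sub, RCLike.re_to_complex, Complex.one_re] at hdual
  linarith
end

section
/- For x > 0 put a = (√x − 1)², b = (√x + 1)², and define g(x) = 3/2 − x + √(4x−1)(2x+1)/(2πx) − (1/π)·[(x−1)·arctan((3x−1)/((x−1)√(4x−1))) + arctan(√(4x−1)) + x·arctan(1/√(4x−1))] for x > 1/4. Then the quantity I(x) = max(1−x, 0) + ∫_a^b |u/x − 1| · √(4x − (u−1−x)²)/(2πu) du equals 2(1−x) for x ∈ (0, 1/4], equals g(x) for x ∈ (1/4, 1), and equals g(x) + x − 1 for x ≥ 1. -/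
open MeasureTheory Real

/-- The function `g` of the distance-to-depolarizing theorem. -/
noncomputable def g (x : ℝ) : ℝ :=
  3/2 - x + Real.sqrt (4 * x - 1) * (2 * x + 1) / (2 * Real.pi * x) -
    (1 / Real.pi) *
      ((x - 1) * Real.arctan ((3 * x - 1) / ((x - 1) * Real.sqrt (4 * x - 1))) +
        Real.arctan (Real.sqrt (4 * x - 1)) +
        x * Real.arctan (1 / Real.sqrt (4 * x - 1)))

/-- `I(x) = ∫ |u/x − 1| dMP_x(u)`: the atom at `0` contributes `max(1−x,0)`, and the
absolutely continuous part has density `√(4x − (u−1−x)²)/(2πu)` on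
`[(√x−1)², (√x+1)²]`. -/
noncomputable def Ifun (x : ℝ) : ℝ :=
  max (1 - x) 0 +
    ∫ u in Set.Icc ((Real.sqrt x - 1) ^ 2) ((Real.sqrt x + 1) ^ 2),
      |u / x - 1| * Real.sqrt (4 * x - (u - 1 - x) ^ 2) / (2 * Real.pi * u)

/-!
On the support `[a, b] = [(√x - 1)², (√x + 1)²]` the signed integrand
`(u/x - 1) √(4x - (u - 1 - x)²) / (2πu)` has an elementary primitive `F`, assembled from the
primitives of `√(r² - (u - c)²)` and `√(r² - (u - c)²) / u` with `r = 2√x`, `c = 1 + x`. Since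
the integrand changes sign only at `u = x`, the absolute integral is `F a + F b - 2 F (max a x)`,
and `F a = -F b`. For `x ≤ 1/4` the sign change lies left of the support, which gives
`2(1 - x)`; for `x > 1/4` the value `F x` turns into the arctangents of `g` through
`arctan (p / q) = arcsin (p / √(p² + q²))`.
-/

open Set

lemma integral_abs_of_nonneg_on_Ioo {f : ℝ → ℝ} {a b : ℝ} (hab : a ≤ b)
    (hf : ∀ u ∈ Ioo a b, 0 ≤ f u) : ∫ u in a..b, |f u| = ∫ u in a..b, f u := by
  rw [intervalIntegral.integral_of_le hab, intervalIntegral.integral_of_le hab,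
    integral_Ioc_eq_integral_Ioo, integral_Ioc_eq_integral_Ioo]
  exact setIntegral_congr_fun measurableSet_Ioo fun u hu => abs_of_nonneg (hf u hu)

lemma integral_abs_eq_sub_of_hasDerivAt_of_nonneg {F f : ℝ → ℝ} {a b : ℝ} (hab : a ≤ b)
    (hF : ContinuousOn F (Icc a b)) (hd : ∀ u ∈ Ioo a b, HasDerivAt F (f u) u)
    (hf : ∀ u ∈ Ioo a b, 0 ≤ f u) :
    IntervalIntegrable (fun u => |f u|) volume a b ∧ ∫ u in a..b, |f u| = F b - F a := by
  have hint : IntervalIntegrable f volume a b :=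
    (intervalIntegrable_iff_integrableOn_Ioc_of_le hab).2
      (intervalIntegral.integrableOn_deriv_of_nonneg hF hd hf)
  exact ⟨hint.abs, (integral_abs_of_nonneg_on_Ioo hab hf).trans
    (intervalIntegral.integral_eq_sub_of_hasDerivAt_of_le hab hF hd hint)⟩

lemma integral_abs_eq_of_hasDerivAt {F f : ℝ → ℝ} {a b c : ℝ} (hac : a ≤ c) (hcb : c ≤ b)
    (hF : ContinuousOn F (Icc a b)) (hd : ∀ u ∈ Ioo a b, HasDerivAt F (f u) u)
    (hneg : ∀ u ∈ Ioo a c, f u ≤ 0) (hpos : ∀ u ∈ Ioo c b, 0 ≤ f u) :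
    ∫ u in a..b, |f u| = F a + F b - 2 * F c := by
  obtain ⟨hint₁, hleft⟩ := integral_abs_eq_sub_of_hasDerivAt_of_nonneg (F := -F) (f := -f) hac
    (hF.mono (Icc_subset_Icc_right hcb)).neg
    (fun u hu => (hd u ⟨hu.1, hu.2.trans_le hcb⟩).neg) fun u hu => neg_nonneg.2 (hneg u hu)
  obtain ⟨hint₂, hright⟩ := integral_abs_eq_sub_of_hasDerivAt_of_nonneg hcb
    (hF.mono (Icc_subset_Icc_left hac)) (fun u hu => hd u ⟨hac.trans_lt hu.1, hu.2⟩) hpos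
  simp only [Pi.neg_apply, abs_neg] at hint₁ hleft
  rw [← intervalIntegral.integral_add_adjacent_intervals hint₁ hint₂, hleft, hright]
  ring

lemma arctan_div_eq_arcsin_div {a b s : ℝ} (hb : 0 < b) (hs : 0 ≤ s)
    (hs2 : s ^ 2 = a ^ 2 + b ^ 2) :
    arctan (a / b) = arcsin (a / s) := by
  have hs0 : s ≠ 0 := by rintro rfl; nlinarith
  rw [arctan_eq_arcsin, show 1 + (a / b) ^ 2 = (s / b) ^ 2 by field_simp; linarith,
    sqrt_sq (by positivity)]
  field_simp

lemma abs_mul_arcsin_div_eq_mul_arctan {k a q s : ℝ} (hq : 0 < q) (hs : 0 ≤ s)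
    (hs2 : s ^ 2 = a ^ 2 + (k * q) ^ 2) :
    |k| * arcsin (a / s) = k * arctan (a / (k * q)) := by
  rcases lt_trichotomy k 0 with hk | rfl | hk
  · rw [abs_of_neg hk, show a / (k * q) = -(a / (-k * q)) by ring, arctan_neg,
      arctan_div_eq_arcsin_div (by nlinarith) hs (by linarith)]
    ring
  · simp
  · rw [abs_of_pos hk, arctan_div_eq_arcsin_div (by positivity) hs hs2]

section Semicircle

variable {r c u : ℝ}

lemma hasDerivAt_sqrt_sq_sub_sq (h : (u - c) ^ 2 < r ^ 2) :
    HasDerivAt (fun u => √(r ^ 2 - (u - c) ^ 2)) (-(u - c) / √(r ^ 2 - (u - c) ^ 2)) u := by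
  have hR : 0 < r ^ 2 - (u - c) ^ 2 := sub_pos.2 h
  have hpoly : HasDerivAt (fun u => r ^ 2 - (u - c) ^ 2) (-(2 * (u - c))) u := by
    simpa using ((hasDerivAt_id u).sub_const c).pow 2 |>.const_sub (r ^ 2)
  convert hpoly.sqrt hR.ne' using 1
  field_simp

lemma hasDerivAt_arcsin_sub_div (hr : 0 < r) (h : (u - c) ^ 2 < r ^ 2) :
    HasDerivAt (fun u => arcsin ((u - c) / r)) (1 / √(r ^ 2 - (u - c) ^ 2)) u := by
  have habs : |u - c| < r := abs_lt_of_sq_lt_sq h hr.le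
  have hlt : (u - c) / r < 1 := (div_lt_one hr).2 (abs_lt.1 habs).2
  have hgt : -1 < (u - c) / r := by rw [lt_div_iff₀ hr]; linarith [(abs_lt.1 habs).1]
  have hsqrt : √(1 - ((u - c) / r) ^ 2) = √(r ^ 2 - (u - c) ^ 2) / r := by
    rw [show 1 - ((u - c) / r) ^ 2 = (r ^ 2 - (u - c) ^ 2) / r ^ 2 by field_simp,
      sqrt_div' _ (sq_nonneg r), sqrt_sq hr.le]
  have hin : HasDerivAt (fun u => (u - c) / r) (1 / r) u :=
    ((hasDerivAt_id u).sub_const c).div_const r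
  refine ((hasDerivAt_arcsin hgt.ne' hlt.ne).comp u hin).congr_deriv ?_
  rw [hsqrt]
  field_simp

lemma hasDerivAt_arcsin_mobius (hr : 0 < r) (hrc : r < c) (hu : 0 < u)
    (h : (u - c) ^ 2 < r ^ 2) :
    HasDerivAt (fun u => arcsin ((c ^ 2 - r ^ 2 - c * u) / (r * u)))
      (-√(c ^ 2 - r ^ 2) / (u * √(r ^ 2 - (u - c) ^ 2))) u := by
  have he2 : √(c ^ 2 - r ^ 2) ^ 2 = c ^ 2 - r ^ 2 := sq_sqrt (by nlinarith)
  have he : 0 < √(c ^ 2 - r ^ 2) := sqrt_pos.2 (by nlinarith)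
  have hs2 : √(r ^ 2 - (u - c) ^ 2) ^ 2 = r ^ 2 - (u - c) ^ 2 := sq_sqrt (by linarith)
  have hs : 0 < √(r ^ 2 - (u - c) ^ 2) := sqrt_pos.2 (by linarith)
  set e := √(c ^ 2 - r ^ 2)
  set s := √(r ^ 2 - (u - c) ^ 2)
  -- for the Möbius argument `m`, `1 - m ^ 2 = (e s / (r u)) ^ 2`, so `|m| < 1`
  have hkey : 1 - ((c ^ 2 - r ^ 2 - c * u) / (r * u)) ^ 2 = (e * s / (r * u)) ^ 2 := by
    rw [div_pow (e * s), mul_pow e, he2, hs2]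
    field_simp
    ring
  have hm : |(c ^ 2 - r ^ 2 - c * u) / (r * u)| < 1 := by
    rw [← sq_lt_one_iff_abs_lt_one]
    nlinarith [hkey, pow_pos (div_pos (mul_pos he hs) (mul_pos hr hu)) 2]
  have hsqrt : √(1 - ((c ^ 2 - r ^ 2 - c * u) / (r * u)) ^ 2) = e * s / (r * u) := by
    rw [hkey, sqrt_sq (by positivity)]
  have hin : HasDerivAt (fun u => (c ^ 2 - r ^ 2 - c * u) / (r * u))
      ((-c * (r * u) - (c ^ 2 - r ^ 2 - c * u) * r) / (r * u) ^ 2) u :=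
    (((hasDerivAt_id u).const_mul c).const_sub _).div ((hasDerivAt_id u).const_mul r)
      (by positivity) |>.congr_deriv (by simp)
  refine ((hasDerivAt_arcsin (abs_lt.1 hm).1.ne' (abs_lt.1 hm).2.ne).comp u hin).congr_deriv ?_
  rw [hsqrt]
  field_simp
  linear_combination he2

noncomputable def semicircPrim (r c u : ℝ) : ℝ :=
  ((u - c) * √(r ^ 2 - (u - c) ^ 2) + r ^ 2 * arcsin ((u - c) / r)) / 2

noncomputable def semicircDivPrim (r c u : ℝ) : ℝ :=
  √(r ^ 2 - (u - c) ^ 2) + c * arcsin ((u - c) / r) +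
    √(c ^ 2 - r ^ 2) * arcsin ((c ^ 2 - r ^ 2 - c * u) / (r * u))

lemma hasDerivAt_semicircPrim (hr : 0 < r) (h : (u - c) ^ 2 < r ^ 2) :
    HasDerivAt (semicircPrim r c) (√(r ^ 2 - (u - c) ^ 2)) u := by
  have hs2 : √(r ^ 2 - (u - c) ^ 2) ^ 2 = r ^ 2 - (u - c) ^ 2 := sq_sqrt (by linarith)
  have hs : 0 < √(r ^ 2 - (u - c) ^ 2) := sqrt_pos.2 (by linarith)
  refine ((((hasDerivAt_id u).sub_const c).mul (hasDerivAt_sqrt_sq_sub_sq h)).add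
    ((hasDerivAt_arcsin_sub_div hr h).const_mul (r ^ 2)) |>.div_const 2).congr_deriv ?_
  rw [id]
  field_simp
  linear_combination -hs2

lemma hasDerivAt_semicircDivPrim (hr : 0 < r) (hrc : r ≤ c) (hu : 0 < u)
    (h : (u - c) ^ 2 < r ^ 2) :
    HasDerivAt (semicircDivPrim r c) (√(r ^ 2 - (u - c) ^ 2) / u) u := by
  have hs2 : √(r ^ 2 - (u - c) ^ 2) ^ 2 = r ^ 2 - (u - c) ^ 2 := sq_sqrt (by linarith)
  have hs : 0 < √(r ^ 2 - (u - c) ^ 2) := sqrt_pos.2 (by linarith)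
  have he2 : √(c ^ 2 - r ^ 2) ^ 2 = c ^ 2 - r ^ 2 := sq_sqrt (by nlinarith)
  have hlast : HasDerivAt
      (fun u => √(c ^ 2 - r ^ 2) * arcsin ((c ^ 2 - r ^ 2 - c * u) / (r * u)))
      (-√(c ^ 2 - r ^ 2) ^ 2 / (u * √(r ^ 2 - (u - c) ^ 2))) u := by
    rcases hrc.eq_or_lt with rfl | hlt
    · simpa using hasDerivAt_const u (0 : ℝ)
    · exact ((hasDerivAt_arcsin_mobius hr hlt hu h).const_mul _).congr_deriv (by ring)
  refine (((hasDerivAt_sqrt_sq_sub_sq h).add ((hasDerivAt_arcsin_sub_div hr h).const_mul c)).add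
    hlast).congr_deriv ?_
  rw [he2]
  field_simp
  linear_combination -hs2

lemma continuous_semicircPrim : Continuous (semicircPrim r c) := by
  unfold semicircPrim
  fun_prop

lemma continuousOn_semicircDivPrim (hr : 0 < r) (hrc : r ≤ c) :
    ContinuousOn (semicircDivPrim r c) (Icc (c - r) (c + r)) := by
  have hlast : ContinuousOn
      (fun u => √(c ^ 2 - r ^ 2) * arcsin ((c ^ 2 - r ^ 2 - c * u) / (r * u)))
      (Icc (c - r) (c + r)) := by
    rcases hrc.eq_or_lt with rfl | hlt
    · simpa using continuousOn_const
    · refine continuousOn_const.mul (continuous_arcsin.comp_continuousOn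
        (continuousOn_const.sub (continuousOn_const.mul continuousOn_id) |>.div
          (continuousOn_const.mul continuousOn_id) fun u hu => ?_))
      have : 0 < u := by linarith [hu.1]
      positivity
  exact (Continuous.continuousOn (by fun_prop)).add hlast

lemma semicircPrim_add (hr : 0 < r) : semicircPrim r c (c + r) = π * r ^ 2 / 4 := by
  simp [semicircPrim, hr.ne']
  ring

lemma semicircPrim_sub (hr : 0 < r) : semicircPrim r c (c - r) = -(π * r ^ 2 / 4) := by
  simp [semicircPrim, hr.ne']
  ring

lemma semicircDivPrim_add (hr : 0 < r) (hrc : r ≤ c) :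
    semicircDivPrim r c (c + r) = π * (c - √(c ^ 2 - r ^ 2)) / 2 := by
  have hm : (c ^ 2 - r ^ 2 - c * (c + r)) / (r * (c + r)) = -1 := by
    rw [div_eq_iff (mul_ne_zero hr.ne' (by linarith))]
    ring
  simp [semicircDivPrim, hr.ne', hm]
  ring

lemma semicircDivPrim_sub (hr : 0 < r) (hrc : r ≤ c) :
    semicircDivPrim r c (c - r) = -(π * (c - √(c ^ 2 - r ^ 2)) / 2) := by
  rcases hrc.eq_or_lt with rfl | hlt
  · simp [semicircDivPrim, hr.ne']
    ring
  · have hm : (c ^ 2 - r ^ 2 - c * (c - r)) / (r * (c - r)) = 1 := by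
      rw [div_eq_iff (mul_ne_zero hr.ne' (by linarith))]
      ring
    simp [semicircDivPrim, hr.ne', hm]
    ring

end Semicircle

noncomputable def mpIntegrand (x u : ℝ) : ℝ :=
  (u / x - 1) * √(4 * x - (u - 1 - x) ^ 2) / (2 * π * u)

noncomputable def mpPrim (x u : ℝ) : ℝ :=
  (semicircPrim (2 * √x) (1 + x) u / x - semicircDivPrim (2 * √x) (1 + x) u) / (2 * π)

section MarchenkoPastur

variable {x u : ℝ}

lemma two_sqrt_le_one_add (hx : 0 ≤ x) : 2 * √x ≤ 1 + x := by
  nlinarith [sq_nonneg (√x - 1), sq_sqrt hx]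

lemma sq_two_sqrt (hx : 0 ≤ x) : (2 * √x) ^ 2 = 4 * x := by
  rw [mul_pow, sq_sqrt hx]
  ring

lemma sqrt_one_add_sq_sub_sq_two_sqrt (hx : 0 ≤ x) :
    √((1 + x) ^ 2 - (2 * √x) ^ 2) = |1 - x| := by
  rw [sq_two_sqrt hx, show (1 + x) ^ 2 - 4 * x = (1 - x) ^ 2 by ring, sqrt_sq_eq_abs]

lemma sqrt_add_one_sq (hx : 0 ≤ x) : (√x + 1) ^ 2 = 1 + x + 2 * √x := by
  linear_combination sq_sqrt hx

lemma sqrt_sub_one_sq (hx : 0 ≤ x) : (√x - 1) ^ 2 = 1 + x - 2 * √x := by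
  linear_combination sq_sqrt hx

lemma self_le_sqrt_sub_one_sq (hx : 0 ≤ x) (hx4 : x ≤ 1 / 4) : x ≤ (√x - 1) ^ 2 := by
  rw [sqrt_sub_one_sq hx]
  nlinarith [sq_sqrt hx, sqrt_nonneg x]

lemma sqrt_sub_one_sq_le_self (hx4 : 1 / 4 ≤ x) : (√x - 1) ^ 2 ≤ x := by
  have hx : 0 ≤ x := by linarith
  rw [sqrt_sub_one_sq hx]
  nlinarith [sq_sqrt hx, sqrt_nonneg x]

lemma hasDerivAt_mpPrim (hx : 0 < x) (hu : u ∈ Ioo ((√x - 1) ^ 2) ((√x + 1) ^ 2)) :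
    HasDerivAt (mpPrim x) (mpIntegrand x u) u := by
  rw [sqrt_sub_one_sq hx.le, sqrt_add_one_sq hx.le] at hu
  have hu0 : 0 < u := by linarith [hu.1, two_sqrt_le_one_add hx.le]
  have h : (u - (1 + x)) ^ 2 < (2 * √x) ^ 2 := sq_lt_sq' (by linarith [hu.1]) (by linarith [hu.2])
  have hr : 0 < 2 * √x := by positivity
  have hP := hasDerivAt_semicircPrim hr h
  have hD := hasDerivAt_semicircDivPrim hr (two_sqrt_le_one_add hx.le) hu0 h
  refine ((hP.div_const x).sub hD |>.div_const (2 * π)).congr_deriv ?_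
  rw [sq_two_sqrt hx.le, show u - (1 + x) = u - 1 - x by ring, mpIntegrand]
  field_simp

lemma continuousOn_mpPrim (hx : 0 < x) :
    ContinuousOn (mpPrim x) (Icc ((√x - 1) ^ 2) ((√x + 1) ^ 2)) := by
  rw [sqrt_sub_one_sq hx.le, sqrt_add_one_sq hx.le]
  exact ((continuous_semicircPrim.continuousOn.div_const x).sub
    (continuousOn_semicircDivPrim (by positivity) (two_sqrt_le_one_add hx.le))).div_const _

lemma mpPrim_sqrt_add_one_sq (hx : 0 < x) :
    mpPrim x ((√x + 1) ^ 2) = 1 / 2 - (1 + x - |1 - x|) / 4 := by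
  rw [sqrt_add_one_sq hx.le, mpPrim, semicircPrim_add (by positivity),
    semicircDivPrim_add (by positivity) (two_sqrt_le_one_add hx.le),
    sqrt_one_add_sq_sub_sq_two_sqrt hx.le, sq_two_sqrt hx.le]
  field_simp
  ring

lemma mpPrim_sqrt_sub_one_sq (hx : 0 < x) :
    mpPrim x ((√x - 1) ^ 2) = -(1 / 2 - (1 + x - |1 - x|) / 4) := by
  rw [sqrt_sub_one_sq hx.le, mpPrim, semicircPrim_sub (by positivity),
    semicircDivPrim_sub (by positivity) (two_sqrt_le_one_add hx.le),
    sqrt_one_add_sq_sub_sq_two_sqrt hx.le, sq_two_sqrt hx.le]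
  field_simp
  ring

lemma mpIntegrand_nonpos (hx : 0 < x) (hu : 0 ≤ u) (hux : u ≤ x) : mpIntegrand x u ≤ 0 := by
  have : u / x - 1 ≤ 0 := by rw [sub_nonpos, div_le_one hx]; exact hux
  unfold mpIntegrand
  exact div_nonpos_of_nonpos_of_nonneg (mul_nonpos_of_nonpos_of_nonneg this (sqrt_nonneg _))
    (by positivity)

lemma mpIntegrand_nonneg (hx : 0 < x) (hxu : x ≤ u) : 0 ≤ mpIntegrand x u := by
  have : 0 ≤ u / x - 1 := by rw [sub_nonneg, one_le_div hx]; exact hxu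
  have hu : 0 ≤ u := hx.le.trans hxu
  unfold mpIntegrand
  positivity

lemma abs_mpIntegrand (hu : 0 ≤ u) :
    |mpIntegrand x u| = |u / x - 1| * √(4 * x - (u - 1 - x) ^ 2) / (2 * π * u) := by
  rw [mpIntegrand, abs_div, abs_mul, abs_of_nonneg (sqrt_nonneg _),
    abs_of_nonneg (by positivity : 0 ≤ 2 * π * u)]

lemma Ifun_eq_sub_mpPrim (hx : 0 < x) :
    Ifun x = max (1 - x) 0 - 2 * mpPrim x (max ((√x - 1) ^ 2) x) := by
  have hab : (√x - 1) ^ 2 ≤ (√x + 1) ^ 2 := by nlinarith [sqrt_nonneg x]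
  have hxb : x ≤ (√x + 1) ^ 2 := by nlinarith [sqrt_nonneg x, sq_sqrt hx.le]
  have hint := integral_abs_eq_of_hasDerivAt (le_max_left _ x) (max_le hab hxb)
    (continuousOn_mpPrim hx) (fun u hu => hasDerivAt_mpPrim hx hu)
    (fun u hu => mpIntegrand_nonpos hx ((sq_nonneg _).trans hu.1.le)
      ((lt_max_iff.1 hu.2).resolve_left hu.1.not_gt).le)
    (fun u hu => mpIntegrand_nonneg hx ((le_max_right _ _).trans hu.1.le))
  unfold Ifun
  rw [integral_Icc_eq_integral_Ioc, ← intervalIntegral.integral_of_le hab,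
    intervalIntegral.integral_congr (g := fun u => |mpIntegrand x u|) fun u hu =>
      (abs_mpIntegrand ((sq_nonneg _).trans (uIcc_of_le hab ▸ hu).1)).symm,
    hint, mpPrim_sqrt_sub_one_sq hx, mpPrim_sqrt_add_one_sq hx]
  ring

lemma mpPrim_self (hx : 1 / 4 < x) : mpPrim x x = (1 - x - g x) / 2 := by
  have hx0 : 0 < x := by linarith
  have hq : 0 < √(4 * x - 1) := sqrt_pos.2 (by linarith)
  have hq2 : √(4 * x - 1) ^ 2 = 4 * x - 1 := sq_sqrt (by linarith)
  have hA : arcsin (1 / (2 * √x)) = arctan (1 / √(4 * x - 1)) := by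
    have := abs_mul_arcsin_div_eq_mul_arctan (k := 1) (a := 1) hq (s := 2 * √x) (by positivity)
      (by rw [sq_two_sqrt hx0.le, one_mul, hq2]; ring)
    rwa [abs_one, one_mul, one_mul, one_mul] at this
  have hB : |1 - x| * arcsin ((3 * x - 1) / (2 * x * √x)) =
      (x - 1) * arctan ((3 * x - 1) / ((x - 1) * √(4 * x - 1))) := by
    rw [abs_sub_comm]
    refine abs_mul_arcsin_div_eq_mul_arctan hq (by positivity) ?_
    rw [mul_pow, mul_pow, mul_pow, hq2, sq_sqrt hx0.le]
    ring
  have hR : (2 * √x) ^ 2 - (x - (1 + x)) ^ 2 = 4 * x - 1 := by rw [sq_two_sqrt hx0.le]; ring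
  have hP : semicircPrim (2 * √x) (1 + x) x =
      (-√(4 * x - 1) - 4 * x * arctan (1 / √(4 * x - 1))) / 2 := by
    rw [semicircPrim, hR, sq_two_sqrt hx0.le, show x - (1 + x) = -1 by ring, neg_div, arcsin_neg,
      hA]
    ring
  have hD : semicircDivPrim (2 * √x) (1 + x) x = √(4 * x - 1) -
      (1 + x) * arctan (1 / √(4 * x - 1)) -
      (x - 1) * arctan ((3 * x - 1) / ((x - 1) * √(4 * x - 1))) := by
    rw [semicircDivPrim, hR, sqrt_one_add_sq_sub_sq_two_sqrt hx0.le, ← hB, ← hA,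
      show x - (1 + x) = -1 by ring, neg_div, arcsin_neg, sq_two_sqrt hx0.le,
      show ((1 + x) ^ 2 - 4 * x - (1 + x) * x) / (2 * √x * x) = -((3 * x - 1) / (2 * x * √x)) by
        ring, arcsin_neg]
    ring
  rw [mpPrim, hP, hD, g, one_div (√(4 * x - 1)), arctan_inv_of_pos hq]
  field_simp
  ring

end MarchenkoPastur

/-- The first absolute moment `I(x) = ∫ |u/x − 1| dMP_x(u)` equals `2(1−x)` on
`(0, 1/4]`, `g(x)` on `(1/4, 1)`, and `g(x) + x − 1` on `[1, ∞)`. -/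
theorem stmt13 (x : ℝ) (hx : 0 < x) :
    (x ≤ 1/4 → Ifun x = 2 * (1 - x)) ∧
    (1/4 < x → x < 1 → Ifun x = g x) ∧
    (1 ≤ x → Ifun x = g x + x - 1) := by
  have hI := Ifun_eq_sub_mpPrim hx
  refine ⟨fun hx4 => ?_, fun hx4 hx1 => ?_, fun hx1 => ?_⟩
  · rw [hI, max_eq_left (self_le_sqrt_sub_one_sq hx.le hx4), mpPrim_sqrt_sub_one_sq hx,
      max_eq_left (by linarith), abs_of_pos (by linarith : 0 < 1 - x)]
    ring
  · rw [hI, max_eq_right (sqrt_sub_one_sq_le_self hx4.le), mpPrim_self hx4,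
      max_eq_left (by linarith)]
    ring
  · have hx4 : 1 / 4 < x := by linarith
    rw [hI, max_eq_right (sqrt_sub_one_sq_le_self hx4.le), mpPrim_self hx4,
      max_eq_right (by linarith)]
    ring
end

section
/- ∫_0^4 |u − 1| · √(4 − (u−2)²)/(2πu) du = 3√3/(2π). -/
/-!
On `(0, 4)` the integrand is `|H'| / (2π)` with `H u = (u - 4)/2 · √(4u - u²)`. `H` decreases
on `[0, 1]`, increases on `[1, 4]`, and `H 0 = H 4 = 0`, `H 1 = -3√3/2`, so the integral is
`(2 · 3√3/2) / (2π)`. The singularity of the integrand at `0` needs no estimate: a nonnegative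
derivative of a function continuous on a closed interval is integrable there.
-/

open MeasureTheory Real Set intervalIntegral

section DerivNonneg

variable {f f' : ℝ → ℝ} {a b : ℝ}

theorem intervalIntegrable_deriv_of_nonneg_of_le (hab : a ≤ b) (hcont : ContinuousOn f (Icc a b))
    (hderiv : ∀ x ∈ Ioo a b, HasDerivAt f (f' x) x) (hpos : ∀ x ∈ Ioo a b, 0 ≤ f' x) :
    IntervalIntegrable f' volume a b :=
  (intervalIntegrable_iff_integrableOn_Ioc_of_le hab).2
    (integrableOn_deriv_of_nonneg hcont hderiv hpos)

theorem integral_eq_sub_of_hasDerivAt_of_nonneg (hab : a ≤ b) (hcont : ContinuousOn f (Icc a b))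
    (hderiv : ∀ x ∈ Ioo a b, HasDerivAt f (f' x) x) (hpos : ∀ x ∈ Ioo a b, 0 ≤ f' x) :
    ∫ x in a..b, f' x = f b - f a :=
  integral_eq_sub_of_hasDerivAt_of_le hab hcont hderiv
    (intervalIntegrable_deriv_of_nonneg_of_le hab hcont hderiv hpos)

end DerivNonneg

namespace MarchenkoPastur

noncomputable def absMomentIntegrand (u : ℝ) : ℝ :=
  |u - 1| * √(4 - (u - 2) ^ 2) / (2 * π * u)

noncomputable def primitive (u : ℝ) : ℝ :=
  (u - 4) / 2 * √(4 - (u - 2) ^ 2)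

@[fun_prop]
theorem continuous_primitive : Continuous primitive := by
  unfold primitive
  fun_prop

theorem primitive_zero : primitive 0 = 0 := by norm_num [primitive]

theorem primitive_one : primitive 1 = -(3 / 2 * √3) := by norm_num [primitive]

theorem primitive_four : primitive 4 = 0 := by norm_num [primitive]

theorem hasDerivAt_primitive {u : ℝ} (hu : u ∈ Ioo (0 : ℝ) 4) :
    HasDerivAt primitive ((u - 1) * √(4 - (u - 2) ^ 2) / u) u := by
  obtain ⟨hu0, hu4⟩ := hu
  have hpos : 0 < 4 - (u - 2) ^ 2 := by nlinarith
  have hsqrt : HasDerivAt (fun u : ℝ => √(4 - (u - 2) ^ 2))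
      (-(2 * (u - 2)) / (2 * √(4 - (u - 2) ^ 2))) u := by
    have := (((hasDerivAt_id u).sub_const 2).pow 2).const_sub 4
    simpa using this.sqrt hpos.ne'
  have hlin : HasDerivAt (fun u : ℝ => (u - 4) / 2) (1 / 2) u := by
    simpa using ((hasDerivAt_id u).sub_const 4).div_const 2
  refine (hlin.mul hsqrt).congr_deriv ?_
  field_simp
  rw [sq_sqrt hpos.le]
  ring

theorem absMomentIntegrand_nonneg {u : ℝ} (hu : 0 ≤ u) : 0 ≤ absMomentIntegrand u := by
  unfold absMomentIntegrand
  positivity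

theorem hasDerivAt_neg_primitive_div {u : ℝ} (hu : u ∈ Ioo (0 : ℝ) 1) :
    HasDerivAt (fun u => -primitive u / (2 * π)) (absMomentIntegrand u) u := by
  refine ((hasDerivAt_primitive ⟨hu.1, by linarith [hu.2]⟩).neg.div_const (2 * π)).congr_deriv ?_
  rw [absMomentIntegrand, abs_of_nonpos (by linarith [hu.2])]
  field_simp [hu.1.ne', pi_ne_zero]

theorem hasDerivAt_primitive_div {u : ℝ} (hu : u ∈ Ioo (1 : ℝ) 4) :
    HasDerivAt (fun u => primitive u / (2 * π)) (absMomentIntegrand u) u := by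
  refine ((hasDerivAt_primitive ⟨by linarith [hu.1], hu.2⟩).div_const (2 * π)).congr_deriv ?_
  rw [absMomentIntegrand, abs_of_nonneg (by linarith [hu.1])]
  field_simp [pi_ne_zero]

end MarchenkoPastur

/-- `∫₀⁴ |u − 1| √(4 − (u−2)²)/(2πu) du = 3√3/(2π)`: the first absolute moment of the
centered Marčenko–Pastur distribution of parameter 1. -/
theorem stmt14 :
    (∫ u in Set.Ioc (0 : ℝ) 4, |u - 1| * Real.sqrt (4 - (u - 2) ^ 2) / (2 * Real.pi * u)) =
      3 * Real.sqrt 3 / (2 * Real.pi) := by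
  open MarchenkoPastur in
  have hcont01 : ContinuousOn (fun u => -primitive u / (2 * π)) (Icc 0 1) := by fun_prop
  have hcont14 : ContinuousOn (fun u => primitive u / (2 * π)) (Icc 1 4) := by fun_prop
  have hderiv01 := fun u (hu : u ∈ Ioo (0 : ℝ) 1) => hasDerivAt_neg_primitive_div hu
  have hderiv14 := fun u (hu : u ∈ Ioo (1 : ℝ) 4) => hasDerivAt_primitive_div hu
  have hnonneg01 := fun u (hu : u ∈ Ioo (0 : ℝ) 1) => absMomentIntegrand_nonneg hu.1.le
  have hnonneg14 := fun u (hu : u ∈ Ioo (1 : ℝ) 4) => absMomentIntegrand_nonneg (by linarith [hu.1])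
  change ∫ u in Ioc 0 4, absMomentIntegrand u = _
  rw [← integral_of_le (by norm_num), ← integral_add_adjacent_intervals
    (intervalIntegrable_deriv_of_nonneg_of_le zero_le_one hcont01 hderiv01 hnonneg01)
    (intervalIntegrable_deriv_of_nonneg_of_le (by norm_num) hcont14 hderiv14 hnonneg14),
    integral_eq_sub_of_hasDerivAt_of_nonneg zero_le_one hcont01 hderiv01 hnonneg01,
    integral_eq_sub_of_hasDerivAt_of_nonneg (by norm_num) hcont14 hderiv14 hnonneg14,
    primitive_zero, primitive_one, primitive_four]
  field_simp
  ring
end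

section
/- With g(x) = 3/2 − x + √(4x−1)(2x+1)/(2πx) − (1/π)·[(x−1)·arctan((3x−1)/((x−1)√(4x−1))) + arctan(√(4x−1)) + x·arctan(1/√(4x−1))], the function h(x) = g(x) + x − 1 satisfies lim_{x→∞} √x · h(x) = 8/(3π). -/
/-!
By the addition formula, the three arctangents in `g` combine into `(x - 1) arctan z + π / 2`
with `z = arctanArg x = (2x - 1) √(4x - 1) / (2x² - 4x + 1)`, which turns `π h(x)` into
`(x - 1) (z - arctan z) - (4x - 1)^{3/2} / (2x (2x² - 4x + 1))`.
As `x → ∞` we have `√x z → 2`, so `z → 0⁺`; together with `(z - arctan z) / z³ → 1/3` this gives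
`√x (x - 1) (z - arctan z) → 8/3`, while `√x` times the last term is `O(1/x)`.
-/

open Filter Real

open Topology

theorem sub_pow_three_div_three_le_arctan {z : ℝ} (hz : 0 ≤ z) : z - z ^ 3 / 3 ≤ arctan z := by
  have hmono : Monotone fun z : ℝ => arctan z - (z - z ^ 3 / 3) := by
    refine monotone_of_hasDerivAt_nonneg (f' := fun z => z ^ 4 / (1 + z ^ 2)) (fun z => ?_)
      fun z => by positivity
    refine ((hasDerivAt_arctan z).sub ((hasDerivAt_id z).sub
      ((hasDerivAt_pow 3 z).div_const 3))).congr_deriv ?_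
    field_simp
    ring
  simpa using hmono hz

theorem arctan_le_sub_pow_three_div {z : ℝ} (hz : 0 ≤ z) :
    arctan z ≤ z - z ^ 3 / (3 * (1 + z ^ 2)) := by
  have hmono : Monotone fun z : ℝ => z - z ^ 3 / (3 * (1 + z ^ 2)) - arctan z := by
    refine monotone_of_hasDerivAt_nonneg (f' := fun z => 2 * z ^ 4 / (3 * (1 + z ^ 2) ^ 2))
      (fun z => ?_) fun z => by positivity
    refine ((hasDerivAt_id z).sub ((hasDerivAt_pow 3 z).div
      (((hasDerivAt_pow 2 z).const_add 1).const_mul 3) (by positivity))).sub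
      (hasDerivAt_arctan z) |>.congr_deriv ?_
    field_simp
    ring
  simpa using hmono hz

theorem tendsto_sub_arctan_div_pow_three :
    Tendsto (fun z => (z - arctan z) / z ^ 3) (𝓝[>] 0) (𝓝 (1 / 3)) := by
  have hlower : Tendsto (fun z : ℝ => 1 / (3 * (1 + z ^ 2))) (𝓝[>] 0) (𝓝 (1 / 3)) := by
    have : ContinuousAt (fun z : ℝ => 1 / (3 * (1 + z ^ 2))) 0 :=
      ContinuousAt.div (by fun_prop) (by fun_prop) (by norm_num)
    simpa using this.tendsto.mono_left nhdsWithin_le_nhds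
  refine tendsto_of_tendsto_of_tendsto_of_le_of_le' hlower tendsto_const_nhds ?_ ?_ <;>
    filter_upwards [self_mem_nhdsWithin] with z (hz : 0 < z)
  · rw [le_div_iff₀ (by positivity)]
    have := arctan_le_sub_pow_three_div hz.le
    field_simp at this ⊢
    linarith
  · rw [div_le_iff₀ (by positivity)]
    linarith [sub_pow_three_div_three_le_arctan hz.le]

theorem tendsto_atTop_of_eventuallyEq_comp_inv {f F : ℝ → ℝ} {a : ℝ}
    (hF : ContinuousAt F 0) (hFa : F 0 = a) (hfF : ∀ᶠ x in atTop, F x⁻¹ = f x) :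
    Tendsto f atTop (𝓝 a) :=
  hFa ▸ (hF.tendsto.comp tendsto_inv_atTop_zero).congr' hfF

noncomputable def arctanArg (x : ℝ) : ℝ :=
  (2 * x - 1) * √(4 * x - 1) / (2 * x ^ 2 - 4 * x + 1)

lemma arctan_add_arctan_one_div_sqrt {x : ℝ} (hx : 2 < x) :
    arctan ((3 * x - 1) / ((x - 1) * √(4 * x - 1))) + arctan (1 / √(4 * x - 1)) =
      arctan (arctanArg x) := by
  have hq : 0 < 2 * x ^ 2 - 4 * x + 1 := by nlinarith
  have hx1 : 0 < x - 1 := by linarith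
  have hss : √(4 * x - 1) ^ 2 = 4 * x - 1 := sq_sqrt (by linarith)
  have hs : 0 < √(4 * x - 1) := sqrt_pos.mpr (by linarith)
  rw [arctanArg]
  generalize √(4 * x - 1) = s at *
  have hprod : (3 * x - 1) / ((x - 1) * s) * (1 / s) < 1 := by
    rw [div_mul_div_comm, div_lt_one (by positivity)]
    nlinarith
  rw [arctan_add hprod]
  congr 1
  have hden : (x - 1) * s ^ 2 - (3 * x - 1) ≠ 0 := by nlinarith
  field_simp
  rw [eq_div_iff (by nlinarith)]
  linear_combination -(2 * x - 1) * (x - 1) * hss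

lemma pi_mul_g_add_sub_one {x : ℝ} (hx : 2 < x) :
    π * (g x + x - 1) = (x - 1) * (arctanArg x - arctan (arctanArg x)) -
      (4 * x - 1) * √(4 * x - 1) / (2 * x * (2 * x ^ 2 - 4 * x + 1)) := by
  have hs : 0 < √(4 * x - 1) := sqrt_pos.mpr (by linarith)
  have hq : 2 * x ^ 2 - 4 * x + 1 ≠ 0 := by nlinarith
  have hcompl : arctan (1 / √(4 * x - 1)) = π / 2 - arctan √(4 * x - 1) := by
    rw [one_div, arctan_inv_of_pos hs]
  have hsum := arctan_add_arctan_one_div_sqrt hx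
  rw [g]
  generalize arctan (arctanArg x) = c at *
  rw [arctanArg]
  generalize arctan ((3 * x - 1) / ((x - 1) * √(4 * x - 1))) = a at *
  generalize arctan (1 / √(4 * x - 1)) = b at *
  generalize arctan √(4 * x - 1) = d at *
  generalize √(4 * x - 1) = s at *
  generalize hQ : 2 * x ^ 2 - 4 * x + 1 = q at *
  field_simp
  linear_combination (-2 * x * q * (x - 1)) * hsum + (-2 * x * q) * hcompl - s * (2 * x + 1) * hQ

lemma sqrt_mul_sqrt_four_mul_sub_one {x : ℝ} (hx : 0 < x) :
    √x * √(4 * x - 1) = x * √(4 - x⁻¹) := by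
  rw [← sqrt_mul hx.le, show x * (4 * x - 1) = x ^ 2 * (4 - x⁻¹) by field_simp,
    sqrt_mul (sq_nonneg x), sqrt_sq hx.le]

lemma tendsto_sqrt_mul_arctanArg_atTop : Tendsto (fun x => √x * arctanArg x) atTop (𝓝 2) := by
  refine tendsto_atTop_of_eventuallyEq_comp_inv
    (F := fun u => (2 - u) * √(4 - u) / (u ^ 2 - 4 * u + 2))
    (ContinuousAt.div (by fun_prop) (by fun_prop) (by norm_num)) ?_ ?_
  · norm_num [show √4 = 2 by rw [show (4 : ℝ) = 2 ^ 2 by norm_num, sqrt_sq zero_le_two]]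
  filter_upwards [eventually_gt_atTop 2] with x hx
  have hx0 : 0 < x := by linarith
  have hq : 2 * x ^ 2 - 4 * x + 1 ≠ 0 := by nlinarith
  rw [arctanArg, mul_div_assoc', mul_left_comm, sqrt_mul_sqrt_four_mul_sub_one hx0]
  field_simp
  ring

lemma tendsto_arctanArg_atTop : Tendsto arctanArg atTop (𝓝[>] 0) := by
  refine tendsto_nhdsWithin_iff.mpr ⟨?_, ?_⟩
  · refine (tendsto_sqrt_mul_arctanArg_atTop.div_atTop tendsto_sqrt_atTop).congr' ?_
    filter_upwards [eventually_gt_atTop 0] with x hx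
    field_simp [(sqrt_pos.mpr hx).ne']
  · filter_upwards [eventually_gt_atTop 2] with x hx
    have hq : 0 < 2 * x ^ 2 - 4 * x + 1 := by nlinarith
    exact div_pos (mul_pos (by linarith) (sqrt_pos.mpr (by linarith))) hq

lemma tendsto_sqrt_mul_sub_one_mul_arctanArg_pow_three :
    Tendsto (fun x => √x * (x - 1) * arctanArg x ^ 3) atTop (𝓝 8) := by
  have h := (tendsto_sqrt_mul_arctanArg_atTop.pow 3).mul
    (tendsto_inv_atTop_zero.const_sub (1 : ℝ))
  norm_num at h
  refine h.congr' ?_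
  filter_upwards [eventually_gt_atTop 0] with x hx
  rw [mul_pow, pow_succ, sq_sqrt hx.le]
  field_simp

lemma tendsto_sqrt_mul_remainder :
    Tendsto (fun x => √x * ((4 * x - 1) * √(4 * x - 1) / (2 * x * (2 * x ^ 2 - 4 * x + 1))))
      atTop (𝓝 0) := by
  refine tendsto_atTop_of_eventuallyEq_comp_inv
    (F := fun u => u * (4 - u) * √(4 - u) / (2 * (u ^ 2 - 4 * u + 2)))
    (ContinuousAt.div (by fun_prop) (by fun_prop) (by norm_num)) (by simp) ?_
  filter_upwards [eventually_gt_atTop 2] with x hx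
  have hx0 : 0 < x := by linarith
  have hq : 2 * x ^ 2 - 4 * x + 1 ≠ 0 := by nlinarith
  rw [mul_div_assoc', mul_left_comm, sqrt_mul_sqrt_four_mul_sub_one hx0]
  field_simp
  ring

/-- `h(x) = g(x) + x − 1` satisfies `√x · h(x) → 8/(3π)` as `x → ∞`. -/
theorem stmt15 :
    Tendsto (fun x : ℝ => Real.sqrt x * (g x + x - 1)) atTop
      (nhds (8 / (3 * Real.pi))) := by
  have h := ((tendsto_sqrt_mul_sub_one_mul_arctanArg_pow_three.mul
    (tendsto_sub_arctan_div_pow_three.comp tendsto_arctanArg_atTop)).sub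
    tendsto_sqrt_mul_remainder).div_const π
  rw [show (8 * (1 / 3) - 0) / π = 8 / (3 * π) by ring] at h
  refine h.congr' ?_
  filter_upwards [eventually_gt_atTop 2, tendsto_arctanArg_atTop self_mem_nhdsWithin]
    with x hx (hz : 0 < arctanArg x)
  rw [Function.comp_apply, mul_assoc _ (arctanArg x ^ 3), mul_div_cancel₀ _ (by positivity),
    div_eq_iff pi_ne_zero]
  linear_combination -√x * pi_mul_g_add_sub_one hx
end
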